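/- arXiv:1602.03301 — 2 statements merged into one kernel-verified Lean document; each statement's English description precedes it below -/
import Mathlib

section
/- Let N ≥ 1, 1 < p < 2, a₃ > 0, and let A : (0,∞) → [0,∞) be locally absolutely continuous and satisfy, for almost every s > 0, min{A(s), A(s) + s·A'(s)} ≥ a₃ min{1, s^(p-2)}. Define φ : ℝ^N → ℝ^N by φ(z) = A(|z|)z for z ≠ 0 and φ(0) = 0. Then there exists a constant C₂ > 0, depending only on p and a₃, such that for all ξ, ζ ∈ ℝ^N with (ξ,ζ) ≠ (0,0): (φ(ξ) − φ(ζ)) · (ξ − ζ) ≥ C₂ |ξ − ζ|² · min{1, (|ξ| + |ζ|)^(p-2)}. (Singular case of Lemma 4.1(ii).) -/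
/-!
Let `m(s) = a₃ min{1, s^(p-2)}`, which decreases since `p < 2`. The hypothesis says that `A ≥ m`
and that `g(s) = s A(s)` has derivative `A + s A' ≥ m` a.e.; as `g` is absolutely continuous,
`g(t) - g(r) ≥ m(t) (t - r)` for `0 < r ≤ t`, and `A ≥ m` holds everywhere by continuity. With
`t = |ξ|`, `r = |ζ|`, `c = m(t + r)` one has
`(φ(ξ) - φ(ζ))·(ξ - ζ) - c|ξ - ζ|² = (A(t) - c) t² + (A(r) - c) r² - (A(t) + A(r) - 2c) ξ·ζ`,
and bounding `ξ·ζ` by `∓ t r` according to the sign of `A(t) + A(r) - 2c` leaves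
`(t ± r) ((A(t) - c) t ± (A(r) - c) r) ≥ 0`. Hence `C₂ = a₃`.
-/

open MeasureTheory RealInnerProductSpace

open Classical in
/-- The operator density `φ(z) = A(|z|) z`, with `φ(0) = 0`. -/
noncomputable def phiA {N : ℕ} (A : ℝ → ℝ) (z : EuclideanSpace ℝ (Fin N)) :
    EuclideanSpace ℝ (Fin N) :=
  if z = 0 then 0 else A ‖z‖ • z

open Set

theorem ContinuousAt.le_of_ae_le {X Y : Type*} [TopologicalSpace X] [MeasurableSpace X]
    {μ : Measure X} [μ.IsOpenPosMeasure] [TopologicalSpace Y] [LinearOrder Y]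
    [OrderClosedTopology Y] {f g : X → Y} {U : Set X} {x : X} (hU : IsOpen U) (hx : x ∈ U)
    (hfg : ∀ᵐ y ∂μ, y ∈ U → f y ≤ g y) (hf : ContinuousAt f x) (hg : ContinuousAt g x) :
    f x ≤ g x :=
  hf.continuousWithinAt.closure_le ((Measure.dense_of_ae hfg).open_subset_closure_inter hU hx)
    hg.continuousWithinAt fun _ hy => hy.2 hy.1

section Primitive

variable {A A' : ℝ → ℝ} {r t : ℝ}

theorem absolutelyContinuousOnInterval_const_add_primitive (c : ℝ)
    (hA' : IntervalIntegrable A' volume r t) :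
    AbsolutelyContinuousOnInterval (fun x => c + ∫ s in r..x, A' s) r t :=
  contDiffOn_const.absolutelyContinuousOnInterval.add
    (hA'.absolutelyContinuousOnInterval_intervalIntegral left_mem_uIcc)

theorem continuousOn_of_eqOn_primitive (hA' : IntervalIntegrable A' volume r t)
    (hA : EqOn A (fun x => A r + ∫ s in r..x, A' s) (uIcc r t)) :
    ContinuousOn A (uIcc r t) :=
  (absolutelyContinuousOnInterval_const_add_primitive (A r) hA').continuousOn.congr hA

theorem integral_add_mul_eq_sub_of_eqOn_primitive (hA' : IntervalIntegrable A' volume r t)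
    (hA : EqOn A (fun x => A r + ∫ s in r..x, A' s) (uIcc r t)) :
    ∫ s in r..t, (A s + s * A' s) = t * A t - r * A r := by
  set G := fun x => A r + ∫ s in r..x, A' s
  have hid : AbsolutelyContinuousOnInterval id r t := contDiffOn_id.absolutelyContinuousOnInterval
  calc ∫ s in r..t, (A s + s * A' s) = ∫ x in r..t, deriv id x * G x + id x * deriv G x := by
        refine intervalIntegral.integral_congr_ae ?_
        filter_upwards [hA'.ae_hasDerivAt_integral] with x hderiv hx
        have hx' : x ∈ uIcc r t := uIoc_subset_uIcc hx
        rw [deriv_id, one_mul, ← hA hx', ((hderiv hx' r left_mem_uIcc).const_add (A r)).deriv]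
        rfl
    _ = id t * G t - id r * G r :=
        hid.integral_deriv_mul_eq_sub (absolutelyContinuousOnInterval_const_add_primitive _ hA')
    _ = t * A t - r * A r := by rw [← hA left_mem_uIcc, ← hA right_mem_uIcc]; rfl

theorem sub_mul_le_of_ae_le_add_mul {c : ℝ} (hrt : r ≤ t)
    (hA' : IntervalIntegrable A' volume r t)
    (hA : EqOn A (fun x => A r + ∫ s in r..x, A' s) (uIcc r t))
    (hc : ∀ᵐ s, s ∈ Icc r t → c ≤ A s + s * A' s) :
    (t - r) * c ≤ t * A t - r * A r := by
  have hint : IntervalIntegrable (fun s => A s + s * A' s) volume r t :=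
    (continuousOn_of_eqOn_primitive hA' hA).intervalIntegrable.add
      (hA'.continuousOn_mul continuousOn_id)
  rw [← integral_add_mul_eq_sub_of_eqOn_primitive hA' hA]
  calc (t - r) * c = ∫ _ in r..t, c := by simp
    _ ≤ ∫ s in r..t, (A s + s * A' s) :=
      intervalIntegral.integral_mono_ae_restrict hrt intervalIntegrable_const hint <| by
        filter_upwards [ae_restrict_of_ae hc, ae_restrict_mem measurableSet_Icc] with s hs hsI
          using hs hsI

end Primitive

theorem mul_norm_sub_sq_le_inner_smul_sub_smul {E : Type*} [NormedAddCommGroup E]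
    [InnerProductSpace ℝ E] (x y : E) {a b c : ℝ} (hx : ‖x‖ * c ≤ ‖x‖ * a)
    (hy : ‖y‖ * c ≤ ‖y‖ * b)
    (hxy : (‖x‖ - ‖y‖) ^ 2 * c ≤ (‖x‖ - ‖y‖) * (‖x‖ * a - ‖y‖ * b)) :
    c * ‖x - y‖ ^ 2 ≤ ⟪a • x - b • y, x - y⟫ := by
  have hinner : ⟪a • x - b • y, x - y⟫ = a * ‖x‖ ^ 2 + b * ‖y‖ ^ 2 - (a + b) * ⟪x, y⟫ := by
    simp only [inner_sub_left, inner_sub_right, real_inner_smul_left, real_inner_self_eq_norm_sq,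
      real_inner_comm x y]
    ring
  rw [hinner, norm_sub_sq_real]
  obtain ⟨hw₁, hw₂⟩ := abs_le.1 (abs_real_inner_le_norm x y)
  rcases le_total (a + b) (2 * c) with h | h
  · have hx' := sub_nonneg.2 hx
    have hy' := sub_nonneg.2 hy
    nlinarith [mul_le_mul_of_nonneg_left hw₁ (sub_nonneg.2 h), mul_nonneg (norm_nonneg x) hx',
      mul_nonneg (norm_nonneg y) hx', mul_nonneg (norm_nonneg x) hy', mul_nonneg (norm_nonneg y) hy']
  · nlinarith [mul_le_mul_of_nonneg_left hw₂ (sub_nonneg.2 h)]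

theorem phiA_eq_smul {N : ℕ} (A : ℝ → ℝ) (z : EuclideanSpace ℝ (Fin N)) :
    phiA A z = A ‖z‖ • z := by
  unfold phiA
  split_ifs with hz
  · simp [hz]
  · rfl

noncomputable def ellipticLowerBound (p a₃ s : ℝ) : ℝ := a₃ * min 1 (s ^ (p - 2))

section Ellipticity

variable {p a₃ : ℝ} {A A' : ℝ → ℝ}

theorem ellipticLowerBound_antitoneOn (hp : p < 2) (ha₃ : 0 ≤ a₃) :
    AntitoneOn (ellipticLowerBound p a₃) (Ioi 0) := fun s hs _ _ hsu =>
  mul_le_mul_of_nonneg_left (min_le_min le_rfl (Real.rpow_le_rpow_of_nonpos hs hsu (by linarith)))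
    ha₃

theorem continuousAt_ellipticLowerBound {s : ℝ} (hs : 0 < s) :
    ContinuousAt (ellipticLowerBound p a₃) s :=
  continuousAt_const.mul (continuousAt_const.min (Real.continuousAt_rpow_const _ _ (.inl hs.ne')))

theorem eqOn_primitive_of_forall_eq
    (hFTC : ∀ a b : ℝ, 0 < a → a ≤ b →
      IntervalIntegrable A' volume a b ∧ A b = A a + ∫ t in a..b, A' t)
    {r t : ℝ} (hr : 0 < r) (hrt : r ≤ t) :
    EqOn A (fun x => A r + ∫ s in r..x, A' s) (uIcc r t) := fun x hx =>
  (hFTC r x hr (uIcc_of_le hrt ▸ hx).1).2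

theorem ellipticLowerBound_le
    (hFTC : ∀ a b : ℝ, 0 < a → a ≤ b →
      IntervalIntegrable A' volume a b ∧ A b = A a + ∫ t in a..b, A' t)
    (hell : ∀ᵐ s, 0 < s → ellipticLowerBound p a₃ s ≤ min (A s) (A s + s * A' s))
    {t : ℝ} (ht : 0 < t) : ellipticLowerBound p a₃ t ≤ A t := by
  have hle : t / 2 ≤ t + 1 := by linarith
  have hA : ContinuousOn A (uIcc (t / 2) (t + 1)) :=
    continuousOn_of_eqOn_primitive (hFTC _ _ (half_pos ht) hle).1
      (eqOn_primitive_of_forall_eq hFTC (half_pos ht) hle)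
  refine (continuousAt_ellipticLowerBound ht).le_of_ae_le (μ := volume) isOpen_Ioi ht ?_
    (hA.continuousAt (uIcc_of_le hle ▸ Icc_mem_nhds (by linarith) (by linarith)))
  filter_upwards [hell] with s hs hs₀ using (hs hs₀).trans (min_le_left _ _)

theorem mul_ellipticLowerBound_le (hp : p < 2) (ha₃ : 0 ≤ a₃)
    (hFTC : ∀ a b : ℝ, 0 < a → a ≤ b →
      IntervalIntegrable A' volume a b ∧ A b = A a + ∫ t in a..b, A' t)
    (hell : ∀ᵐ s, 0 < s → ellipticLowerBound p a₃ s ≤ min (A s) (A s + s * A' s))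
    {s u : ℝ} (hs : 0 ≤ s) (hsu : s ≤ u) :
    s * ellipticLowerBound p a₃ u ≤ s * A s := by
  rcases hs.eq_or_lt with rfl | hs
  · simp
  exact mul_le_mul_of_nonneg_left ((ellipticLowerBound_antitoneOn hp ha₃ hs
    (hs.trans_le hsu) hsu).trans (ellipticLowerBound_le hFTC hell hs)) hs.le

theorem sub_mul_ellipticLowerBound_le (hp : p < 2) (ha₃ : 0 ≤ a₃)
    (hFTC : ∀ a b : ℝ, 0 < a → a ≤ b →
      IntervalIntegrable A' volume a b ∧ A b = A a + ∫ t in a..b, A' t)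
    (hell : ∀ᵐ s, 0 < s → ellipticLowerBound p a₃ s ≤ min (A s) (A s + s * A' s))
    {r t u : ℝ} (hr : 0 ≤ r) (hrt : r ≤ t) (htu : t ≤ u) :
    (t - r) * ellipticLowerBound p a₃ u ≤ t * A t - r * A r := by
  rcases hr.eq_or_lt with rfl | hr
  · simpa using mul_ellipticLowerBound_le hp ha₃ hFTC hell hrt htu
  refine sub_mul_le_of_ae_le_add_mul hrt (hFTC r t hr hrt).1
    (eqOn_primitive_of_forall_eq hFTC hr hrt) ?_
  filter_upwards [hell] with s hs hsI
  have hs₀ : 0 < s := hr.trans_le hsI.1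
  exact (ellipticLowerBound_antitoneOn hp ha₃ hs₀ (hs₀.trans_le (hsI.2.trans htu))
    (hsI.2.trans htu)).trans ((hs hs₀).trans (min_le_right _ _))

theorem sq_sub_mul_ellipticLowerBound_le (hp : p < 2) (ha₃ : 0 ≤ a₃)
    (hFTC : ∀ a b : ℝ, 0 < a → a ≤ b →
      IntervalIntegrable A' volume a b ∧ A b = A a + ∫ t in a..b, A' t)
    (hell : ∀ᵐ s, 0 < s → ellipticLowerBound p a₃ s ≤ min (A s) (A s + s * A' s))
    {r t u : ℝ} (hr : 0 ≤ r) (ht : 0 ≤ t) (hru : r ≤ u) (htu : t ≤ u) :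
    (t - r) ^ 2 * ellipticLowerBound p a₃ u ≤ (t - r) * (t * A t - r * A r) := by
  rcases le_total r t with h | h
  · nlinarith [mul_le_mul_of_nonneg_left
      (sub_mul_ellipticLowerBound_le hp ha₃ hFTC hell hr h htu) (sub_nonneg.2 h)]
  · nlinarith [mul_le_mul_of_nonneg_left
      (sub_mul_ellipticLowerBound_le hp ha₃ hFTC hell ht h hru) (sub_nonneg.2 h)]

end Ellipticity

/-- Local absolute continuity of `A` on `(0,∞)` is encoded through the fundamental theorem of
calculus: `A'` is locally integrable on `(0,∞)` and `A(b) = A(a) + ∫_a^b A'` whenever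
`0 < a ≤ b`. -/
theorem singular_monotonicity_general (p a₃ : ℝ) (hp2 : p < 2) (ha₃ : 0 < a₃) :
    ∃ C₂ > 0, ∀ N : ℕ, 1 ≤ N → ∀ A A' : ℝ → ℝ,
      (∀ s : ℝ, 0 < s → 0 ≤ A s) →
      (∀ a b : ℝ, 0 < a → a ≤ b →
        IntervalIntegrable A' volume a b ∧ A b = A a + ∫ t in a..b, A' t) →
      (∀ᵐ (s : ℝ) ∂volume, 0 < s →
        a₃ * min 1 (s ^ (p - 2)) ≤ min (A s) (A s + s * A' s)) →
      ∀ ξ ζ : EuclideanSpace ℝ (Fin N), ¬(ξ = 0 ∧ ζ = 0) →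
        C₂ * ‖ξ - ζ‖ ^ 2 * min 1 ((‖ξ‖ + ‖ζ‖) ^ (p - 2)) ≤ ⟪phiA A ξ - phiA A ζ, ξ - ζ⟫ := by
  refine ⟨a₃, ha₃, fun N _ A A' _ hFTC hell ξ ζ _ => ?_⟩
  have hξ : ‖ξ‖ ≤ ‖ξ‖ + ‖ζ‖ := le_add_of_nonneg_right (norm_nonneg ζ)
  have hζ : ‖ζ‖ ≤ ‖ξ‖ + ‖ζ‖ := le_add_of_nonneg_left (norm_nonneg ξ)
  rw [phiA_eq_smul, phiA_eq_smul, mul_right_comm]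
  exact mul_norm_sub_sq_le_inner_smul_sub_smul ξ ζ
    (mul_ellipticLowerBound_le hp2 ha₃.le hFTC hell (norm_nonneg ξ) hξ)
    (mul_ellipticLowerBound_le hp2 ha₃.le hFTC hell (norm_nonneg ζ) hζ)
    (sq_sub_mul_ellipticLowerBound_le hp2 ha₃.le hFTC hell (norm_nonneg ζ) (norm_nonneg ξ) hζ hξ)

/-- Singular case (`1 < p < 2`) of Lemma 4.1(ii): monotonicity estimate for `z ↦ A(|z|)z` for a
locally absolutely continuous `A : (0,∞) → [0,∞)` satisfying the ellipticity condition
`min{A(s), A(s) + s A'(s)} ≥ a₃ min{1, s^(p-2)}` a.e. on `(0,∞)`.  Local absolute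
continuity is encoded through the fundamental theorem of calculus: `A'` is locally integrable
on `(0,∞)` and `A(b) = A(a) + ∫_a^b A'` whenever `0 < a ≤ b`.  The constant `C₂` depends only
on `p` and `a₃`. -/
theorem singular_monotonicity (p a₃ : ℝ) (hp1 : 1 < p) (hp2 : p < 2) (ha₃ : 0 < a₃) :
    ∃ C₂ > 0, ∀ N : ℕ, 1 ≤ N → ∀ A A' : ℝ → ℝ,
      (∀ s : ℝ, 0 < s → 0 ≤ A s) →
      (∀ a b : ℝ, 0 < a → a ≤ b →
        IntervalIntegrable A' volume a b ∧ A b = A a + ∫ t in a..b, A' t) →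
      (∀ᵐ (s : ℝ) ∂volume, 0 < s →
        a₃ * min 1 (s ^ (p - 2)) ≤ min (A s) (A s + s * A' s)) →
      ∀ ξ ζ : EuclideanSpace ℝ (Fin N), ¬(ξ = 0 ∧ ζ = 0) →
        C₂ * ‖ξ - ζ‖ ^ 2 * min 1 ((‖ξ‖ + ‖ζ‖) ^ (p - 2)) ≤ ⟪phiA A ξ - phiA A ζ, ξ - ζ⟫ :=
  singular_monotonicity_general p a₃ hp2 ha₃
end

section
/- Let N ≥ 1, p ≥ 2, a₃ > 0, and let A : (0,∞) → [0,∞) be locally absolutely continuous and satisfy, for almost every s > 0, A(s) ≥ a₃ s^(p-2) and A(s) + s·A'(s) ≥ a₃ s^(p-2). Define φ : ℝ^N → ℝ^N by φ(z) = A(|z|)z for z ≠ 0 and φ(0) = 0. Then for all ξ, ζ ∈ ℝ^N: (φ(ξ) − φ(ζ)) · (ξ − ζ) ≥ a₃ |ξ − ζ|² · ∫₀¹ |ζ + t(ξ − ζ)|^(p-2) dt. -/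
/-!
Put `u = (ξ - ζ)/|ξ - ζ|`. On the line `ζ + ℝu` use the coordinate `w = ⟪z, u⟫` and let `c` be the
squared distance of the line from the origin; then `|z| = √(w² + c)` and
`⟪φ z, u⟫ = g w := w A(√(w² + c))`. The estimate thus follows once
`g w - a₃ ∫₀^w √(σ² + c)^(p-2) dσ` is shown to be monotone in `w`.

For `w > 0` substitute `s = √(w² + c)`: `g` becomes the absolutely continuous function
`√(s² - c) A(s)`, whose derivative `s A/√(s² - c) + √(s² - c) A'` dominates `a₃ s^(p-1)/√(s² - c)`
(where `A' ≥ 0` use `A ≥ a₃ s^(p-2)`; where `A' < 0` use `A + s A' ≥ a₃ s^(p-2)` and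
`s² - c ≤ s²`). Letting `w ↓ 0`, with `g ≥ 0` on `(0, ∞)`, gives monotonicity on `[0, ∞)`, and
oddness in `w` does the rest.
-/

open MeasureTheory RealInnerProductSpace

open Set Filter Topology intervalIntegral

theorem AbsolutelyContinuousOnInterval.congr {X : Type*} [PseudoMetricSpace X] {f g : ℝ → X}
    {a b : ℝ} (hf : AbsolutelyContinuousOnInterval f a b) (hfg : EqOn f g (uIcc a b)) :
    AbsolutelyContinuousOnInterval g a b := by
  refine Tendsto.congr' (eventually_inf_principal.2 (Eventually.of_forall fun E hE => ?_)) hf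
  exact Finset.sum_congr rfl fun i hi => by rw [hfg (hE.1 i hi).1, hfg (hE.1 i hi).2]

theorem AbsolutelyContinuousOnInterval.integral_le_sub_of_le_deriv {f g : ℝ → ℝ} {a b : ℝ}
    (hab : a ≤ b) (hf : AbsolutelyContinuousOnInterval f a b)
    (hg : IntervalIntegrable g volume a b) (hle : ∀ᵐ x, x ∈ Ioo a b → g x ≤ deriv f x) :
    ∫ x in a..b, g x ≤ f b - f a := by
  rw [← hf.integral_deriv_eq_sub]
  refine integral_mono_ae_restrict hab hg hf.intervalIntegrable_deriv ?_
  rw [EventuallyLE, ← Measure.restrict_congr_set Ioo_ae_eq_Icc]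
  exact (ae_restrict_iff' measurableSet_Ioo).2 hle

section PrimitivePlusConstant

variable {F F' : ℝ → ℝ} {a b : ℝ}

theorem absolutelyContinuousOnInterval_of_eq_add_integral (hab : a ≤ b)
    (hF' : IntervalIntegrable F' volume a b) (hF : ∀ x ∈ Icc a b, F x = F a + ∫ t in a..x, F' t) :
    AbsolutelyContinuousOnInterval F a b := by
  refine AbsolutelyContinuousOnInterval.congr ?_ (fun x hx => (hF x ?_).symm)
  · exact contDiffOn_const.absolutelyContinuousOnInterval.fun_add
      (hF'.absolutelyContinuousOnInterval_intervalIntegral left_mem_uIcc)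
  · rwa [uIcc_of_le hab] at hx

theorem ae_hasDerivAt_of_eq_add_integral (hF' : IntervalIntegrable F' volume a b)
    (hF : ∀ x ∈ Icc a b, F x = F a + ∫ t in a..x, F' t) :
    ∀ᵐ x, x ∈ Ioo a b → HasDerivAt F (F' x) x := by
  filter_upwards [hF'.ae_hasDerivAt_integral] with x hx hxab
  have hmem : x ∈ uIcc a b := Icc_subset_uIcc (Ioo_subset_Icc_self hxab)
  refine ((hx hmem a left_mem_uIcc).const_add (F a)).congr_of_eventuallyEq ?_
  filter_upwards [Ioo_mem_nhds hxab.1 hxab.2] with y hy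
  exact hF y (Ioo_subset_Icc_self hy)

end PrimitivePlusConstant

theorem mul_div_le_div_mul_add_mul {m a b s W : ℝ} (hs : 0 < s) (hW : 0 < W)
    (hWs : W ^ 2 ≤ s ^ 2) (ha : m ≤ a) (hab : m ≤ a + s * b) :
    m * (s / W) ≤ s / W * a + W * b := by
  have key : m * s ≤ s * a + W ^ 2 * b := by
    rcases le_total 0 b with hb | hb
    · nlinarith [mul_nonneg (sq_nonneg W) hb]
    · nlinarith [mul_le_mul_of_nonpos_right hWs hb]
  calc m * (s / W) = m * s / W := by ring
    _ ≤ (s * a + W ^ 2 * b) / W := by gcongr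
    _ = s / W * a + W * b := by field_simp

theorem hasDerivAt_sqrt_sq_sub {c s : ℝ} (hs : c < s ^ 2) :
    HasDerivAt (fun x => √(x ^ 2 - c)) (s / √(s ^ 2 - c)) s := by
  have hpos : 0 < √(s ^ 2 - c) := Real.sqrt_pos.2 (by linarith)
  convert ((hasDerivAt_pow 2 s).sub_const c).sqrt (by linarith) using 1
  field_simp
  push_cast
  ring

theorem sqrt_sq_sub_sqrt_sq_add {c w : ℝ} (hc : 0 ≤ c) (hw : 0 ≤ w) :
    √(√(w ^ 2 + c) ^ 2 - c) = w := by
  rw [Real.sq_sqrt (by positivity), add_sub_cancel_right, Real.sqrt_sq hw]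

theorem continuous_sqrt_sq_add_rpow {c q : ℝ} (hq : 0 ≤ q) :
    Continuous fun σ : ℝ => √(σ ^ 2 + c) ^ q :=
  (by fun_prop : Continuous fun σ : ℝ => √(σ ^ 2 + c)).rpow_const fun _ => Or.inr hq

def IsPrimitiveOnPos (A A' : ℝ → ℝ) : Prop :=
  ∀ a b : ℝ, 0 < a → a ≤ b → IntervalIntegrable A' volume a b ∧ A b = A a + ∫ t in a..b, A' t

def IsEllipticProfile (p a₃ : ℝ) (A A' : ℝ → ℝ) : Prop :=
  ∀ᵐ s ∂volume, 0 < s → a₃ * s ^ (p - 2) ≤ A s ∧ a₃ * s ^ (p - 2) ≤ A s + s * A' s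

noncomputable def lineDefect (A : ℝ → ℝ) (p a₃ c w : ℝ) : ℝ :=
  w * A √(w ^ 2 + c) - a₃ * ∫ σ in (0 : ℝ)..w, √(σ ^ 2 + c) ^ (p - 2)

section Profile

variable {p a₃ c : ℝ} {A A' : ℝ → ℝ}

theorem integral_le_sqrt_sq_sub_mul_sub (hAC : IsPrimitiveOnPos A A')
    (hell : IsEllipticProfile p a₃ A A') {s₀ s₁ : ℝ} (hc : 0 ≤ c) (hs₀ : 0 < s₀)
    (hcs₀ : c < s₀ ^ 2) (hs : s₀ ≤ s₁) :
    ∫ s in s₀..s₁, a₃ * s ^ (p - 2) * (s / √(s ^ 2 - c))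
      ≤ √(s₁ ^ 2 - c) * A s₁ - √(s₀ ^ 2 - c) * A s₀ := by
  have hcs : ∀ s ∈ uIcc s₀ s₁, c < s ^ 2 := fun s hs' => by
    rw [uIcc_of_le hs] at hs'; nlinarith [hs'.1]
  have hW : ContDiffOn ℝ 1 (fun s => √(s ^ 2 - c)) (uIcc s₀ s₁) :=
    (contDiffOn_id.pow 2 |>.sub contDiffOn_const).sqrt fun s hs' => (sub_pos.2 (hcs s hs')).ne'
  obtain ⟨hA', -⟩ := hAC s₀ s₁ hs₀ hs
  have hA : ∀ x ∈ Icc s₀ s₁, A x = A s₀ + ∫ t in s₀..x, A' t :=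
    fun x hx => (hAC s₀ x hs₀ hx.1).2
  refine (hW.absolutelyContinuousOnInterval.fun_mul
    (absolutelyContinuousOnInterval_of_eq_add_integral hs hA' hA)).integral_le_sub_of_le_deriv hs
    ?_ ?_
  · refine ContinuousOn.intervalIntegrable ?_
    intro s hs'
    have hspos : s ≠ 0 := by rw [uIcc_of_le hs] at hs'; exact (hs₀.trans_le hs'.1).ne'
    have hWs : √(s ^ 2 - c) ≠ 0 := (Real.sqrt_pos.2 (sub_pos.2 (hcs s hs'))).ne'
    have hrpow := Real.continuousAt_rpow_const s (p - 2) (Or.inl hspos)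
    exact ContinuousAt.continuousWithinAt (by fun_prop (disch := assumption))
  · filter_upwards [ae_hasDerivAt_of_eq_add_integral hA' hA, hell] with s hAs hells hsI
    have hsI' : s ∈ uIcc s₀ s₁ := Icc_subset_uIcc (Ioo_subset_Icc_self hsI)
    have hspos : 0 < s := hs₀.trans hsI.1
    rw [((hasDerivAt_sqrt_sq_sub (hcs s hsI')).fun_mul (hAs hsI)).deriv]
    obtain ⟨h₁, h₂⟩ := hells hspos
    refine mul_div_le_div_mul_add_mul hspos (Real.sqrt_pos.2 (by linarith [hcs s hsI'])) ?_ h₁ h₂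
    rw [Real.sq_sqrt (by linarith [hcs s hsI'])]
    linarith

theorem mul_integral_rpow_le_sub_of_pos (hAC : IsPrimitiveOnPos A A')
    (hell : IsEllipticProfile p a₃ A A') (hc : 0 ≤ c) {w₀ w₁ : ℝ} (hw₀ : 0 < w₀) (hw : w₀ ≤ w₁) :
    a₃ * ∫ σ in w₀..w₁, √(σ ^ 2 + c) ^ (p - 2)
      ≤ w₁ * A √(w₁ ^ 2 + c) - w₀ * A √(w₀ ^ 2 + c) := by
  have hs₀ : 0 < √(w₀ ^ 2 + c) := Real.sqrt_pos.2 (by positivity)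
  have hcs₀ : c < √(w₀ ^ 2 + c) ^ 2 := by rw [Real.sq_sqrt (by positivity)]; nlinarith
  have hs : √(w₀ ^ 2 + c) ≤ √(w₁ ^ 2 + c) := Real.sqrt_le_sqrt (by nlinarith)
  have hcs : ∀ s ∈ uIcc √(w₀ ^ 2 + c) √(w₁ ^ 2 + c), c < s ^ 2 := fun s hs' => by
    rw [uIcc_of_le hs] at hs'; nlinarith [hs'.1]
  have hsubst := integral_comp_mul_deriv' (g := fun σ => √(σ ^ 2 + c) ^ (p - 2))
    (fun s hs' => hasDerivAt_sqrt_sq_sub (hcs s hs')) ?_ ?_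
  · rw [sqrt_sq_sub_sqrt_sq_add hc hw₀.le, sqrt_sq_sub_sqrt_sq_add hc (hw₀.le.trans hw)] at hsubst
    calc a₃ * ∫ σ in w₀..w₁, √(σ ^ 2 + c) ^ (p - 2)
        = ∫ s in √(w₀ ^ 2 + c)..√(w₁ ^ 2 + c), a₃ * s ^ (p - 2) * (s / √(s ^ 2 - c)) := by
          rw [← hsubst, ← intervalIntegral.integral_const_mul]
          refine integral_congr fun s hs' => ?_
          have hspos : 0 ≤ s := by rw [uIcc_of_le hs] at hs'; exact hs₀.le.trans hs'.1
          simp only [Function.comp, Real.sq_sqrt (sub_nonneg.2 (hcs s hs').le), sub_add_cancel,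
            Real.sqrt_sq hspos]
          ring
      _ ≤ _ := integral_le_sqrt_sq_sub_mul_sub hAC hell hc hs₀ hcs₀ hs
      _ = _ := by
          rw [sqrt_sq_sub_sqrt_sq_add hc hw₀.le, sqrt_sq_sub_sqrt_sq_add hc (hw₀.le.trans hw)]
  · intro s hs'
    have hWs : √(s ^ 2 - c) ≠ 0 := (Real.sqrt_pos.2 (sub_pos.2 (hcs s hs'))).ne'
    exact ContinuousAt.continuousWithinAt (by fun_prop (disch := assumption))
  · rintro _ ⟨s, hs', rfl⟩
    have hbase : √(√(s ^ 2 - c) ^ 2 + c) ≠ 0 := by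
      rw [Real.sq_sqrt (sub_nonneg.2 (hcs s hs').le), sub_add_cancel]
      exact (Real.sqrt_pos.2 (hc.trans_lt (hcs s hs'))).ne'
    have hrpow := Real.continuousAt_rpow_const _ (p - 2) (Or.inl hbase)
    exact ContinuousAt.continuousWithinAt (by fun_prop)

theorem lineDefect_sub_lineDefect (hp : 2 ≤ p) (w₀ w₁ : ℝ) :
    lineDefect A p a₃ c w₁ - lineDefect A p a₃ c w₀
      = w₁ * A √(w₁ ^ 2 + c) - w₀ * A √(w₀ ^ 2 + c)
        - a₃ * ∫ σ in w₀..w₁, √(σ ^ 2 + c) ^ (p - 2) := by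
  have hF := (continuous_sqrt_sq_add_rpow (c := c) (sub_nonneg.2 hp)).intervalIntegrable
    (μ := volume)
  rw [lineDefect, lineDefect, ← integral_interval_sub_left (hF 0 w₁) (hF 0 w₀)]
  ring

theorem lineDefect_neg (w : ℝ) : lineDefect A p a₃ c (-w) = -lineDefect A p a₃ c w := by
  have hodd : ∫ σ in (0 : ℝ)..-w, √(σ ^ 2 + c) ^ (p - 2)
      = -∫ σ in (0 : ℝ)..w, √(σ ^ 2 + c) ^ (p - 2) := by
    rw [← neg_zero, ← integral_comp_neg, integral_symm]
    simp only [neg_zero, neg_sq]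
  rw [lineDefect, lineDefect, hodd, neg_sq]
  ring

theorem monotoneOn_lineDefect_Ioi (hp : 2 ≤ p) (hAC : IsPrimitiveOnPos A A')
    (hell : IsEllipticProfile p a₃ A A') (hc : 0 ≤ c) :
    MonotoneOn (lineDefect A p a₃ c) (Ioi 0) := fun w₀ hw₀ w₁ _ hw => by
  have := mul_integral_rpow_le_sub_of_pos hAC hell hc hw₀ hw
  linarith [lineDefect_sub_lineDefect (A := A) (a₃ := a₃) (c := c) hp w₀ w₁]

theorem lineDefect_nonneg (hp : 2 ≤ p) (hA0 : ∀ s : ℝ, 0 < s → 0 ≤ A s)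
    (hAC : IsPrimitiveOnPos A A') (hell : IsEllipticProfile p a₃ A A') (hc : 0 ≤ c) {w : ℝ}
    (hw : 0 < w) : 0 ≤ lineDefect A p a₃ c w := by
  have hF := continuous_sqrt_sq_add_rpow (c := c) (sub_nonneg.2 hp)
  have htends : Tendsto (fun ε => -a₃ * ∫ σ in (0 : ℝ)..ε, √(σ ^ 2 + c) ^ (p - 2))
      (𝓝[>] 0) (𝓝 0) := by
    have := ((continuous_primitive (hF.intervalIntegrable (μ := volume)) 0).tendsto 0).const_mul
      (-a₃)
    simpa using this.mono_left nhdsWithin_le_nhds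
  refine le_of_tendsto htends ?_
  filter_upwards [Ioo_mem_nhdsGT hw] with ε hε
  have hAε : 0 ≤ ε * A √(ε ^ 2 + c) :=
    mul_nonneg hε.1.le (hA0 _ (Real.sqrt_pos.2 (by nlinarith [hε.1])))
  have := monotoneOn_lineDefect_Ioi hp hAC hell hc hε.1 hw hε.2.le
  rw [lineDefect] at this
  linarith

theorem monotone_lineDefect (hp : 2 ≤ p) (hA0 : ∀ s : ℝ, 0 < s → 0 ≤ A s)
    (hAC : IsPrimitiveOnPos A A') (hell : IsEllipticProfile p a₃ A A') (hc : 0 ≤ c) :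
    Monotone (lineDefect A p a₃ c) := by
  refine monotone_of_odd_of_monotoneOn_nonneg lineDefect_neg fun x hx y _ hxy => ?_
  rcases (mem_Ici.1 hx).eq_or_lt with rfl | hx
  · rcases hxy.eq_or_lt with rfl | hy
    · rfl
    · simpa [lineDefect] using lineDefect_nonneg hp hA0 hAC hell hc hy
  · exact monotoneOn_lineDefect_Ioi hp hAC hell hc hx (hx.trans_le hxy) hxy

theorem mul_integral_rpow_le_sub (hp : 2 ≤ p) (hA0 : ∀ s : ℝ, 0 < s → 0 ≤ A s)
    (hAC : IsPrimitiveOnPos A A') (hell : IsEllipticProfile p a₃ A A') (hc : 0 ≤ c)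
    {w₀ w₁ : ℝ} (hw : w₀ ≤ w₁) :
    a₃ * ∫ σ in w₀..w₁, √(σ ^ 2 + c) ^ (p - 2)
      ≤ w₁ * A √(w₁ ^ 2 + c) - w₀ * A √(w₀ ^ 2 + c) := by
  have := monotone_lineDefect hp hA0 hAC hell hc hw
  linarith [lineDefect_sub_lineDefect (A := A) (a₃ := a₃) (c := c) hp w₀ w₁]

end Profile

section Line

variable {E : Type*} [NormedAddCommGroup E] [InnerProductSpace ℝ E] {u : E}

theorem norm_add_smul_eq_sqrt (hu : ‖u‖ = 1) (z : E) (t : ℝ) :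
    ‖z + t • u‖ = √((⟪z, u⟫ + t) ^ 2 + ‖z - ⟪z, u⟫ • u‖ ^ 2) := by
  rw [← Real.sqrt_sq (norm_nonneg (z + t • u))]
  congr 1
  simp only [norm_add_sq_real, norm_sub_sq_real, inner_smul_right, norm_smul, hu,
    Real.norm_eq_abs, mul_one, sq_abs]
  ring

theorem integral_norm_add_smul_rpow (hu : ‖u‖ = 1) (z : E) {n : ℝ} (hn : n ≠ 0) (q : ℝ) :
    ∫ t in (0 : ℝ)..1, ‖z + t • n • u‖ ^ q
      = n⁻¹ * ∫ σ in ⟪z, u⟫..⟪z, u⟫ + n, √(σ ^ 2 + ‖z - ⟪z, u⟫ • u‖ ^ 2) ^ q := by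
  simpa [smul_smul, norm_add_smul_eq_sqrt hu, mul_comm] using
    integral_comp_add_mul (fun σ => √(σ ^ 2 + ‖z - ⟪z, u⟫ • u‖ ^ 2) ^ q) hn ⟪z, u⟫
      (a := 0) (b := 1)

end Line

theorem inner_phiA {N : ℕ} (A : ℝ → ℝ) (z u : EuclideanSpace ℝ (Fin N)) :
    ⟪phiA A z, u⟫ = ⟪z, u⟫ * A ‖z‖ := by
  unfold phiA
  split_ifs with hz
  · simp [hz]
  · rw [real_inner_smul_left]
    ring

theorem inner_phiA_add_smul_sub {N : ℕ} (A : ℝ → ℝ) {u : EuclideanSpace ℝ (Fin N)}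
    (hu : ‖u‖ = 1) (z : EuclideanSpace ℝ (Fin N)) (n : ℝ) :
    ⟪phiA A (z + n • u) - phiA A z, n • u⟫
      = n * ((⟪z, u⟫ + n) * A √((⟪z, u⟫ + n) ^ 2 + ‖z - ⟪z, u⟫ • u‖ ^ 2)
        - ⟪z, u⟫ * A √(⟪z, u⟫ ^ 2 + ‖z - ⟪z, u⟫ • u‖ ^ 2)) := by
  have hz : ‖z‖ = √(⟪z, u⟫ ^ 2 + ‖z - ⟪z, u⟫ • u‖ ^ 2) := by
    simpa using norm_add_smul_eq_sqrt hu z 0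
  rw [inner_smul_right, inner_sub_left, inner_phiA, inner_phiA, norm_add_smul_eq_sqrt hu, hz,
    inner_add_left, real_inner_smul_left, real_inner_self_eq_norm_sq, hu]
  ring

theorem segment_integral_estimate_general (N : ℕ) (p a₃ : ℝ) (hp : 2 ≤ p)
    (A A' : ℝ → ℝ)
    (hA0 : ∀ s : ℝ, 0 < s → 0 ≤ A s)
    (hAC : ∀ a b : ℝ, 0 < a → a ≤ b →
      IntervalIntegrable A' volume a b ∧ A b = A a + ∫ t in a..b, A' t)
    (hell : ∀ᵐ (s : ℝ) ∂volume, 0 < s →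
      a₃ * s ^ (p - 2) ≤ A s ∧ a₃ * s ^ (p - 2) ≤ A s + s * A' s) :
    ∀ ξ ζ : EuclideanSpace ℝ (Fin N),
      a₃ * ‖ξ - ζ‖ ^ 2 * (∫ t in (0:ℝ)..1, ‖ζ + t • (ξ - ζ)‖ ^ (p - 2)) ≤
        ⟪phiA A ξ - phiA A ζ, ξ - ζ⟫ := by
  intro ξ ζ
  rcases eq_or_ne ξ ζ with rfl | hξζ
  · simp
  obtain ⟨n, u, hn, hu, hv⟩ : ∃ (n : ℝ) (u : EuclideanSpace ℝ (Fin N)),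
      0 < n ∧ ‖u‖ = 1 ∧ ξ - ζ = n • u :=
    ⟨‖ξ - ζ‖, ‖ξ - ζ‖⁻¹ • (ξ - ζ), norm_pos_iff.2 (sub_ne_zero.2 hξζ),
      norm_smul_inv_norm (sub_ne_zero.2 hξζ),
      (smul_inv_smul₀ (norm_ne_zero_iff.2 (sub_ne_zero.2 hξζ)) _).symm⟩
  rw [hv, show ξ = ζ + n • u by rw [← hv]; abel, integral_norm_add_smul_rpow hu ζ hn.ne',
    inner_phiA_add_smul_sub A hu, norm_smul, Real.norm_of_nonneg hn.le, hu]
  have h1d := mul_integral_rpow_le_sub hp hA0 hAC hell (sq_nonneg ‖ζ - ⟪ζ, u⟫ • u‖)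
    (le_add_of_nonneg_right hn.le : ⟪ζ, u⟫ ≤ ⟪ζ, u⟫ + n)
  refine Eq.trans_le ?_ (mul_le_mul_of_nonneg_left h1d hn.le)
  field_simp

/-- Relation (finale) of the paper: for `p ≥ 2` and a locally absolutely continuous
`A : (0,∞) → [0,∞)` satisfying `A(s) ≥ a₃ s^(p-2)` and `A(s) + s A'(s) ≥ a₃ s^(p-2)` a.e. on
`(0,∞)`, one has, for all `ξ, ζ`,
`(φ(ξ) − φ(ζ)) · (ξ − ζ) ≥ a₃ |ξ − ζ|² ∫₀¹ |ζ + t(ξ − ζ)|^(p-2) dt`.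
Local absolute continuity is encoded through the fundamental theorem of calculus. -/
theorem segment_integral_estimate (N : ℕ) (hN : 1 ≤ N) (p a₃ : ℝ) (hp : 2 ≤ p) (ha₃ : 0 < a₃)
    (A A' : ℝ → ℝ)
    (hA0 : ∀ s : ℝ, 0 < s → 0 ≤ A s)
    (hAC : ∀ a b : ℝ, 0 < a → a ≤ b →
      IntervalIntegrable A' volume a b ∧ A b = A a + ∫ t in a..b, A' t)
    (hell : ∀ᵐ (s : ℝ) ∂volume, 0 < s →
      a₃ * s ^ (p - 2) ≤ A s ∧ a₃ * s ^ (p - 2) ≤ A s + s * A' s) :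
    ∀ ξ ζ : EuclideanSpace ℝ (Fin N),
      a₃ * ‖ξ - ζ‖ ^ 2 * (∫ t in (0:ℝ)..1, ‖ζ + t • (ξ - ζ)‖ ^ (p - 2)) ≤
        ⟪phiA A ξ - phiA A ζ, ξ - ζ⟫ :=
  segment_integral_estimate_general N p a₃ hp A A' hA0 hAC hell
end
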